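/- For 0 < x_i < 1 with Σ_i x_i = 1 and i ranging over d ≥ 3 indices, the function f(x) = Σ_i x_i (log x_i)² satisfies f(x) ≤ (log d)²; consequently, for any density matrix ρ on ℂ^d with d ≥ 3 and full rank, Tr(ρ (log ρ)²) ≤ (log d)². -/

import Mathlib

open Matrix Kronecker BigOperators
open scoped ComplexOrder

noncomputable section

/-- Entrywise complex conjugation of a matrix (in the fixed basis). -/
def conjM {α : Type*} (ρ : Matrix α α ℂ) : Matrix α α ℂ := ρ.map (starRingEnd ℂ)

/-- A matrix is unitary. -/
def IsUnitary {α : Type*} [Fintype α] [DecidableEq α] (U : Matrix α α ℂ) : Prop :=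
  U * Uᴴ = 1 ∧ Uᴴ * U = 1

/-- A density matrix: positive semidefinite with unit trace. -/
def IsDensity {α : Type*} [Fintype α] [DecidableEq α] (ρ : Matrix α α ℂ) : Prop :=
  ρ.PosSemidef ∧ ρ.trace = 1

/-- Partial trace over the second tensor factor. -/
def traceB {α β : Type*} [Fintype β] (ρ : Matrix (α × β) (α × β) ℂ) : Matrix α α ℂ :=
  fun a a' => ∑ b, ρ (a, b) (a', b)

/-- Partial trace over the first tensor factor. -/
def traceA {α β : Type*} [Fintype α] (ρ : Matrix (α × β) (α × β) ℂ) : Matrix β β ℂ :=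
  fun b b' => ∑ a, ρ (a, b) (a, b')


section Stmt19Aux
open Real Set

set_option maxHeartbeats 8000000

/-- The function `x ↦ x (log x)²`. -/
def gg (x : ℝ) : ℝ := x * Real.log x ^ 2

lemma hasDerivAt_gg {x : ℝ} (hx : 0 < x) :
    HasDerivAt gg (Real.log x ^ 2 + 2 * Real.log x) x := by
  have h1 : HasDerivAt Real.log x⁻¹ x := Real.hasDerivAt_log hx.ne'
  have h2 : HasDerivAt (fun x => Real.log x ^ 2) (2 * Real.log x * x⁻¹) x := by
    simpa using (h1.fun_pow 2)
  have h3 := (hasDerivAt_id x).mul h2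
  refine h3.congr_deriv ?_
  field_simp
  simp only [id]; ring

lemma deriv_gg {x : ℝ} (hx : 0 < x) :
    deriv gg x = Real.log x ^ 2 + 2 * Real.log x := (hasDerivAt_gg hx).deriv

lemma deriv_gg_le {a b : ℝ} (ha : Real.exp (-1) ≤ a) (hb : 0 < b)
    (hb1 : b ≤ Real.exp (-1)) (hab : a * b ≤ Real.exp (-2)) :
    deriv gg a ≤ deriv gg b := by
  have ha0 : (0:ℝ) < a := lt_of_lt_of_le (Real.exp_pos _) ha
  rw [deriv_gg ha0, deriv_gg hb]
  have hv : -1 ≤ Real.log a := by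
    have := Real.log_le_log (Real.exp_pos _) ha
    simpa using this
  have hu : Real.log b ≤ -1 := by
    have := Real.log_le_log hb hb1
    simpa using this
  have huv : Real.log a + Real.log b ≤ -2 := by
    have h1 : Real.log (a*b) ≤ Real.log (Real.exp (-2)) :=
      Real.log_le_log (by positivity) hab
    rw [Real.log_mul ha0.ne' hb.ne', Real.log_exp] at h1
    exact h1
  nlinarith [sq_nonneg (Real.log a - Real.log b), sq_nonneg (Real.log a + Real.log b)]

lemma concave_gg : ConcaveOn ℝ (Set.Ioc 0 (Real.exp (-1))) gg := by
  have hint : interior (Set.Ioc (0:ℝ) (Real.exp (-1))) = Set.Ioo 0 (Real.exp (-1)) := by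
    simp [interior_Ioc]
  apply concaveOn_of_deriv2_nonpos (convex_Ioc _ _)
  · apply ContinuousOn.mul continuousOn_id
    exact ((Real.continuousOn_log.mono (by intro x hx; simp; exact ne_of_gt hx.1)).pow 2)
  · rw [hint]
    intro x hx
    exact ((hasDerivAt_gg hx.1).differentiableAt).differentiableWithinAt
  · rw [hint]
    intro x hx
    have : DifferentiableAt ℝ (deriv gg) x := by
      have hev : (fun y => Real.log y ^ 2 + 2 * Real.log y) =ᶠ[nhds x] deriv gg := by
        filter_upwards [eventually_gt_nhds hx.1] with y hy
        exact (deriv_gg hy).symm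
      apply DifferentiableAt.congr_of_eventuallyEq _ hev.symm
      exact (((Real.differentiableAt_log hx.1.ne').pow 2).add
        ((Real.differentiableAt_log hx.1.ne').const_mul 2))
    exact this.differentiableWithinAt
  · rw [hint]
    intro x hx
    have hev : deriv gg =ᶠ[nhds x] (fun y => Real.log y ^ 2 + 2 * Real.log y) := by
      filter_upwards [eventually_gt_nhds hx.1] with y hy
      exact deriv_gg hy
    have h2 : deriv (deriv gg) x = deriv (fun y => Real.log y ^ 2 + 2 * Real.log y) x :=
      hev.deriv_eq
    have h3 : HasDerivAt (fun y => Real.log y ^ 2 + 2 * Real.log y)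
        (2 * Real.log x * x⁻¹ + 2 * x⁻¹) x := by
      have h1 : HasDerivAt Real.log x⁻¹ x := Real.hasDerivAt_log hx.1.ne'
      have ha : HasDerivAt (fun y => Real.log y ^ 2) (2 * Real.log x * x⁻¹) x := by
        simpa using h1.fun_pow 2
      have hb : HasDerivAt (fun y => 2 * Real.log y) (2 * x⁻¹) x := by
        simpa [mul_comm] using h1.const_mul 2
      exact ha.add hb
    have hlog : Real.log x ≤ -1 := by
      have := Real.log_le_log hx.1 hx.2.le
      simpa using this
    simp only [Function.iterate_succ, Function.iterate_zero, Function.comp_apply, id_eq]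
    rw [h2, h3.deriv]
    have hxinv : (0:ℝ) < x⁻¹ := inv_pos.mpr hx.1
    nlinarith

lemma jensen_gg {ι : Type*} (t : Finset ι) (ht : t.Nonempty) (p : ι → ℝ)
    (hp : ∀ i ∈ t, p i ∈ Set.Ioc 0 (Real.exp (-1))) :
    ∑ i ∈ t, gg (p i) ≤ (t.card : ℝ) * gg ((∑ i ∈ t, p i) / t.card) := by
  have hcard : (0:ℝ) < (t.card : ℝ) := by
    exact_mod_cast Finset.card_pos.mpr ht
  have h := concave_gg.le_map_sum (t := t) (w := fun _ => (t.card : ℝ)⁻¹) (p := p)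
    (fun i _ => by positivity)
    (by simp [Finset.sum_const]; field_simp)
    hp
  simp only [smul_eq_mul] at h
  rw [← Finset.mul_sum, ← Finset.mul_sum] at h
  have h2 : gg ((t.card:ℝ)⁻¹ * ∑ i ∈ t, p i) = gg ((∑ i ∈ t, p i) / t.card) := by
    rw [inv_mul_eq_div]
  rw [h2] at h
  calc ∑ i ∈ t, gg (p i) = (t.card:ℝ) * ((t.card:ℝ)⁻¹ * ∑ i ∈ t, gg (p i)) := by
        field_simp
    _ ≤ (t.card : ℝ) * gg ((∑ i ∈ t, p i) / t.card) := by
        apply mul_le_mul_of_nonneg_left h hcard.le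

lemma key_anti (k c S β : ℝ) (hk : 0 < k) (hc : 0 < c) (hβ : Real.exp (-1) ≤ β)
    (hS : k * β < S)
    (hsmall : S - k * Real.exp (-1) ≤ c * Real.exp (-1))
    (hprod : ∀ m ∈ Set.Icc (Real.exp (-1)) β, m * (S - k * m) ≤ c * Real.exp (-2)) :
    AntitoneOn (fun m => k * gg m + c * gg ((S - k * m) / c)) (Set.Icc (Real.exp (-1)) β) := by
  have hε : (0:ℝ) < Real.exp (-1) := Real.exp_pos _
  have hder : ∀ m ∈ Set.Icc (Real.exp (-1)) β,
      HasDerivAt (fun m => k * gg m + c * gg ((S - k * m) / c))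
        (k * (deriv gg m - deriv gg ((S - k * m)/c))) m := by
    intro m hm
    have hm0 : 0 < m := lt_of_lt_of_le hε hm.1
    have hb0 : 0 < (S - k * m) / c := by
      apply div_pos _ hc
      have : k * m ≤ k * β := by nlinarith [hm.2]
      linarith
    have h1 : HasDerivAt (fun m => (S - k * m) / c) (-k / c) m := by
      have : HasDerivAt (fun m : ℝ => S - k * m) (-k) m := by
        simpa using ((hasDerivAt_id m).const_mul k).const_sub S
      simpa using this.div_const c
    have h2 : HasDerivAt (fun m => gg ((S - k * m) / c))
        ((Real.log ((S - k*m)/c) ^ 2 + 2 * Real.log ((S - k*m)/c)) * (-k / c)) m :=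
      HasDerivAt.comp (h := fun m => (S - k * m) / c) m (hasDerivAt_gg hb0) h1
    have h3 : HasDerivAt (fun m => k * gg m) (k * (Real.log m ^ 2 + 2 * Real.log m)) m :=
      (hasDerivAt_gg hm0).const_mul k
    have h4 : HasDerivAt (fun m => c * gg ((S - k * m) / c))
        (c * ((Real.log ((S - k*m)/c) ^ 2 + 2 * Real.log ((S - k*m)/c)) * (-k / c))) m :=
      h2.const_mul c
    have := h3.add h4
    refine this.congr_deriv ?_
    rw [deriv_gg hm0, deriv_gg hb0]
    field_simp
    ring
  apply antitoneOn_of_deriv_nonpos (convex_Icc _ _)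
  · intro m hm
    exact ((hder m hm).continuousAt).continuousWithinAt
  · intro m hm
    rw [interior_Icc] at hm
    exact ((hder m (Set.mem_Icc_of_Ioo hm)).differentiableAt).differentiableWithinAt
  · intro m hm
    rw [interior_Icc] at hm
    have hm' := Set.mem_Icc_of_Ioo hm
    rw [(hder m hm').deriv]
    have hm0 : 0 < m := lt_of_lt_of_le hε hm'.1
    have hb0 : 0 < (S - k * m) / c := by
      apply div_pos _ hc
      have : k * m ≤ k * β := by nlinarith [hm'.2]
      linarith
    have hb1 : (S - k * m) / c ≤ Real.exp (-1) := by
      rw [div_le_iff₀ hc]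
      have : k * Real.exp (-1) ≤ k * m := by nlinarith [hm'.1]
      linarith
    have hab : m * ((S - k * m)/c) ≤ Real.exp (-2) := by
      rw [mul_div_assoc'] at *
      rw [div_le_iff₀ hc]
      have := hprod m hm'
      have he2 : Real.exp (-2) * c = c * Real.exp (-2) := by ring
      linarith [hprod m hm']
    have := deriv_gg_le hm'.1 hb0 hb1 hab
    nlinarith

lemma scalar_bound {d : ℕ} (hd : 3 ≤ d) (x : Fin d → ℝ)
    (hx0 : ∀ i, 0 < x i) (hsum : ∑ i, x i = 1) :
    ∑ i, gg (x i) ≤ Real.log d ^ 2 := by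
  classical
  set ε := Real.exp (-1) with hεdef
  have hε0 : 0 < ε := Real.exp_pos _
  have heu : Real.exp 1 < 2.7182818286 := Real.exp_one_lt_d9
  have hel : 2.7182818283 < Real.exp 1 := Real.exp_one_gt_d9
  have hmulε : Real.exp 1 * ε = 1 := by
    rw [hεdef, ← Real.exp_add]; norm_num
  have h3ε : 1 ≤ 3 * ε := by nlinarith
  have h8ε : 1 ≤ 8 * ε ^ 2 := by nlinarith [sq_nonneg (Real.exp 1 * ε)]
  have hεhalf : 2 * ε < 1 := by nlinarith
  have he2 : Real.exp (-2) = ε ^ 2 := by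
    rw [show (-2:ℝ) = (-1) + (-1) by norm_num, Real.exp_add, hεdef]; ring
  have hd0 : (0:ℝ) < (d:ℝ) := by positivity
  have hdne : (d:ℝ) ≠ 0 := hd0.ne'
  have hd3 : (3:ℝ) ≤ (d:ℝ) := by exact_mod_cast hd
  have hd1ne : (d:ℝ) - 1 ≠ 0 := by linarith
  have hd2ne : (d:ℝ) - 2 ≠ 0 := by linarith
  have hL : (d:ℝ) * gg (1/(d:ℝ)) = Real.log d ^ 2 := by
    have h : gg (1/(d:ℝ)) = ((d:ℝ))⁻¹ * Real.log d ^ 2 := by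
      unfold gg; rw [one_div, Real.log_inv]; ring
    rw [h]; field_simp
  obtain ⟨j, -, hj⟩ := Finset.exists_max_image Finset.univ x ⟨⟨0, by omega⟩, Finset.mem_univ _⟩
  by_cases hA : ∀ i, x i ≤ ε
  · have h := jensen_gg Finset.univ ⟨j, Finset.mem_univ j⟩ x
      (fun i _ => ⟨hx0 i, hA i⟩)
    rw [hsum, Finset.card_univ, Fintype.card_fin] at h
    calc ∑ i, gg (x i) ≤ (d:ℝ) * gg (1/(d:ℝ)) := h
      _ = Real.log d ^ 2 := hL
  · push_neg at hA
    obtain ⟨j₀, hj₀⟩ := hA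
    have hmε : ε < x j := lt_of_lt_of_le hj₀ (hj j₀ (Finset.mem_univ _))
    have hεmem : ε ∈ Set.Ioc 0 ε := ⟨hε0, le_refl _⟩
    by_cases hB : ∀ i, i ≠ j → x i ≤ ε
    · -- Case B1
      set t := Finset.univ.erase j with ht
      have hjt : j ∈ Finset.univ := Finset.mem_univ j
      have hts : ∑ i ∈ t, x i + x j = 1 := by rw [ht, Finset.sum_erase_add _ _ hjt, hsum]
      have htne : t.Nonempty := by
        rw [← Finset.card_pos, ht, Finset.card_erase_of_mem hjt, Finset.card_univ,
          Fintype.card_fin]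
        omega
      have hs0 : 0 < ∑ i ∈ t, x i := Finset.sum_pos (fun i _ => hx0 i) htne
      have hm1 : x j < 1 := by linarith
      have htcard : (t.card : ℝ) = (d:ℝ) - 1 := by
        rw [ht, Finset.card_erase_of_mem hjt, Finset.card_univ, Fintype.card_fin]
        rw [Nat.cast_sub (by omega)]
        push_cast; ring
      have hjen := jensen_gg t htne x (fun i hi => ⟨hx0 i, hB i (Finset.ne_of_mem_erase hi)⟩)
      rw [htcard] at hjen
      have hsval : ∑ i ∈ t, x i = 1 - x j := by linarith
      rw [hsval] at hjen
      have hsplit : ∑ i ∈ t, gg (x i) + gg (x j) = ∑ i, gg (x i) :=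
        Finset.sum_erase_add _ _ hjt
      have hanti := key_anti 1 ((d:ℝ)-1) 1 (x j) one_pos (by linarith) hmε.le
        (by rw [one_mul]; exact hm1)
        (by
          rw [one_mul]
          have hh := mul_nonneg (show (0:ℝ) ≤ (d:ℝ)-3 by linarith) hε0.le
          nlinarith)
        (by
          intro m hm
          rw [one_mul, he2]
          have h14 : m * (1 - m) ≤ 1/4 := by nlinarith [sq_nonneg (2*m - 1)]
          have hh := mul_nonneg (show (0:ℝ) ≤ (d:ℝ)-3 by linarith) (sq_nonneg ε)
          nlinarith)
      have hmono := hanti (Set.mem_Icc.mpr ⟨le_refl _, hmε.le⟩)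
        (Set.mem_Icc.mpr ⟨hmε.le, le_refl _⟩) hmε.le
      simp only [one_mul] at hmono
      set b0 := (1 - ε) / ((d:ℝ)-1) with hb0
      have hb0mem : b0 ∈ Set.Ioc 0 ε := by
        constructor
        · apply div_pos (by linarith) (by linarith)
        · rw [hb0, div_le_iff₀ (by linarith : (0:ℝ) < (d:ℝ)-1)]
          have hh := mul_nonneg (show (0:ℝ) ≤ (d:ℝ)-3 by linarith) hε0.le
          nlinarith
      have hw1 : (0:ℝ) ≤ 1/(d:ℝ) := by positivity
      have hw2 : (0:ℝ) ≤ ((d:ℝ)-1)/(d:ℝ) := by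
        apply div_nonneg (by linarith) hd0.le
      have hw3 : 1/(d:ℝ) + ((d:ℝ)-1)/(d:ℝ) = 1 := by field_simp; ring
      have htp := concave_gg.2 hεmem hb0mem hw1 hw2 hw3
      have harg : (1/(d:ℝ)) • ε + (((d:ℝ)-1)/(d:ℝ)) • b0 = 1/(d:ℝ) := by
        rw [smul_eq_mul, smul_eq_mul, hb0]
        field_simp
        ring
      rw [harg] at htp
      simp only [smul_eq_mul] at htp
      have hfin : gg ε + ((d:ℝ)-1) * gg b0 ≤ (d:ℝ) * gg (1/(d:ℝ)) := by
        have h5 := mul_le_mul_of_nonneg_left htp hd0.le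
        calc gg ε + ((d:ℝ)-1) * gg b0
            = (d:ℝ) * (1/(d:ℝ) * gg ε + ((d:ℝ)-1)/(d:ℝ) * gg b0) := by field_simp
          _ ≤ (d:ℝ) * gg (1/(d:ℝ)) := h5
      calc ∑ i, gg (x i) = ∑ i ∈ t, gg (x i) + gg (x j) := hsplit.symm
        _ ≤ gg (x j) + ((d:ℝ)-1) * gg ((1 - x j)/((d:ℝ)-1)) := by linarith
        _ ≤ gg ε + ((d:ℝ)-1) * gg ((1 - ε)/((d:ℝ)-1)) := hmono
        _ ≤ (d:ℝ) * gg (1/(d:ℝ)) := hfin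
        _ = Real.log d ^ 2 := hL
    · -- Case B2
      push_neg at hB
      obtain ⟨k₀, hk₀j, hk₀⟩ := hB
      have hrm : x k₀ ≤ x j := hj k₀ (Finset.mem_univ _)
      set t2 := (Finset.univ.erase j).erase k₀ with ht2
      have hk₀mem : k₀ ∈ Finset.univ.erase j := Finset.mem_erase.mpr ⟨hk₀j, Finset.mem_univ _⟩
      have hsum2 : ∑ i ∈ t2, x i + x k₀ + x j = 1 := by
        rw [ht2, Finset.sum_erase_add _ _ hk₀mem, Finset.sum_erase_add _ _ (Finset.mem_univ j),
          hsum]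
      have htc : t2.card = d - 2 := by
        rw [ht2, Finset.card_erase_of_mem hk₀mem, Finset.card_erase_of_mem (Finset.mem_univ j),
          Finset.card_univ, Fintype.card_fin]
        omega
      have ht2card : (t2.card : ℝ) = (d:ℝ) - 2 := by
        rw [htc, Nat.cast_sub (by omega)]
        push_cast; ring
      have ht2ne : t2.Nonempty := by
        rw [← Finset.card_pos, htc]; omega
      have hσ0 : 0 < ∑ i ∈ t2, x i := Finset.sum_pos (fun i _ => hx0 i) ht2ne
      have hσval : ∑ i ∈ t2, x i = 1 - x k₀ - x j := by linarith
      have hother : ∀ i ∈ t2, x i ∈ Set.Ioc 0 ε := by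
        intro i hi
        refine ⟨hx0 i, ?_⟩
        have h1 : x i ≤ ∑ i ∈ t2, x i := Finset.single_le_sum (fun i _ => (hx0 i).le) hi
        rw [hσval] at h1
        nlinarith
      have hjen := jensen_gg t2 ht2ne x hother
      rw [ht2card, hσval] at hjen
      have hsplit : ∑ i ∈ t2, gg (x i) + gg (x k₀) + gg (x j) = ∑ i, gg (x i) := by
        rw [ht2, Finset.sum_erase_add _ _ hk₀mem, Finset.sum_erase_add _ _ (Finset.mem_univ j)]
      have hdd : (0:ℝ) ≤ (d:ℝ) - 3 := by linarith
      have hh1 := mul_nonneg hdd hε0.le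
      have hh2 := mul_nonneg hdd (sq_nonneg ε)
      have hanti2 := key_anti 1 ((d:ℝ)-2) (1 - x k₀) (x j) one_pos (by linarith) hmε.le
        (by rw [one_mul]; linarith)
        (by rw [one_mul]; nlinarith)
        (by
          intro m hm
          rw [one_mul, he2]
          have hm2 : m ≤ 1 - x k₀ := by
            rcases hm with ⟨hma, hmb⟩; linarith
          have hq : m * (1 - x k₀ - m) ≤ (1 - x k₀)^2 / 4 := by
            nlinarith [sq_nonneg (2*m - (1 - x k₀))]
          have hS2 : 1 - x k₀ ≤ 1 - ε := by linarith
          have hS2' : (0:ℝ) ≤ 1 - x k₀ := by linarith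
          have h3 : (1 - x k₀)^2 ≤ (1 - ε)^2 := by nlinarith
          have h4 : (1 - ε)^2 ≤ 4 * ε^2 := by nlinarith
          nlinarith)
      have hmono2 := hanti2 (Set.mem_Icc.mpr ⟨hk₀.le, hrm⟩)
        (Set.mem_Icc.mpr ⟨hmε.le, le_refl _⟩) hrm
      simp only [one_mul] at hmono2
      rw [show 1 - x k₀ - x k₀ = 1 - 2 * x k₀ from by ring] at hmono2
      have hanti3 := key_anti 2 ((d:ℝ)-2) 1 (x k₀) two_pos (by linarith) hk₀.le
        (by linarith)
        (by nlinarith)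
        (by
          intro r hr
          rw [he2]
          rcases hr with ⟨hra, hrb⟩
          have hint : (0:ℝ) ≤ (r - ε) * (2*r + 2*ε - 1) := by
            apply mul_nonneg (by linarith)
            linarith
          nlinarith)
      have hmono3 := hanti3 (Set.mem_Icc.mpr ⟨le_refl _, hk₀.le⟩)
        (Set.mem_Icc.mpr ⟨hk₀.le, le_refl _⟩) hk₀.le
      set b1 := (1 - 2*ε) / ((d:ℝ)-2) with hb1
      have hb1mem : b1 ∈ Set.Ioc 0 ε := by
        constructor
        · apply div_pos (by linarith) (by linarith)
        · rw [hb1, div_le_iff₀ (by linarith : (0:ℝ) < (d:ℝ)-2)]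
          nlinarith
      have hw1 : (0:ℝ) ≤ 2/(d:ℝ) := by positivity
      have hw2 : (0:ℝ) ≤ ((d:ℝ)-2)/(d:ℝ) := div_nonneg (by linarith) hd0.le
      have hw3 : 2/(d:ℝ) + ((d:ℝ)-2)/(d:ℝ) = 1 := by field_simp; ring
      have htp := concave_gg.2 hεmem hb1mem hw1 hw2 hw3
      have harg : (2/(d:ℝ)) • ε + (((d:ℝ)-2)/(d:ℝ)) • b1 = 1/(d:ℝ) := by
        rw [smul_eq_mul, smul_eq_mul, hb1]
        field_simp
        ring
      rw [harg] at htp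
      simp only [smul_eq_mul] at htp
      have hfin : 2 * gg ε + ((d:ℝ)-2) * gg b1 ≤ (d:ℝ) * gg (1/(d:ℝ)) := by
        have h5 := mul_le_mul_of_nonneg_left htp hd0.le
        calc 2 * gg ε + ((d:ℝ)-2) * gg b1
            = (d:ℝ) * (2/(d:ℝ) * gg ε + ((d:ℝ)-2)/(d:ℝ) * gg b1) := by field_simp
          _ ≤ (d:ℝ) * gg (1/(d:ℝ)) := h5
      have hmono3' : 2 * gg (x k₀) + ((d:ℝ)-2) * gg ((1 - 2 * x k₀)/((d:ℝ)-2)) ≤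
          2 * gg ε + ((d:ℝ)-2) * gg ((1 - 2*ε)/((d:ℝ)-2)) := hmono3
      calc ∑ i, gg (x i) = ∑ i ∈ t2, gg (x i) + gg (x k₀) + gg (x j) := hsplit.symm
        _ ≤ gg (x j) + gg (x k₀) + ((d:ℝ)-2) * gg ((1 - x k₀ - x j)/((d:ℝ)-2)) := by linarith
        _ ≤ 2 * gg (x k₀) + ((d:ℝ)-2) * gg ((1 - 2 * x k₀)/((d:ℝ)-2)) := by linarith [hmono2]
        _ ≤ 2 * gg ε + ((d:ℝ)-2) * gg ((1 - 2 * ε)/((d:ℝ)-2)) := hmono3'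
        _ ≤ (d:ℝ) * gg (1/(d:ℝ)) := hfin
        _ = Real.log d ^ 2 := hL

end Stmt19Aux

/-- for `d ≥ 3` and a probability vector `x` with `0 < xᵢ < 1`,
`Σᵢ xᵢ (log xᵢ)² ≤ (log d)²`; consequently, for a full-rank density matrix
`ρ = U diag(x) U†` on `ℂ^d` (with `log ρ = U diag(log x) U†`),
`Tr(ρ (log ρ)²) ≤ (log d)²`. -/
theorem stmt_19 {d : ℕ} (hd : 3 ≤ d)
    (x : Fin d → ℝ) (hx : ∀ i, 0 < x i ∧ x i < 1) (hsum : ∑ i, x i = 1)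
    (U : Matrix (Fin d) (Fin d) ℂ) (hU : IsUnitary U) :
    (∑ i, x i * Real.log (x i) ^ 2 ≤ Real.log d ^ 2) ∧
    (((U * Matrix.diagonal (fun i => (x i : ℂ)) * Uᴴ) *
        (U * Matrix.diagonal (fun i => (Real.log (x i) : ℂ)) * Uᴴ) *
        (U * Matrix.diagonal (fun i => (Real.log (x i) : ℂ)) * Uᴴ)).trace.re
      ≤ Real.log d ^ 2) := by
  have hsc : ∑ i, x i * Real.log (x i) ^ 2 ≤ Real.log d ^ 2 := by
    have h := scalar_bound hd x (fun i => (hx i).1) hsum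
    simpa [gg] using h
  refine ⟨hsc, ?_⟩
  have hmat : ((U * Matrix.diagonal (fun i => (x i : ℂ)) * Uᴴ) *
        (U * Matrix.diagonal (fun i => (Real.log (x i) : ℂ)) * Uᴴ) *
        (U * Matrix.diagonal (fun i => (Real.log (x i) : ℂ)) * Uᴴ)).trace.re
      = ∑ i, x i * Real.log (x i) ^ 2 := by
    set A := Matrix.diagonal (fun i => (x i : ℂ)) with hA
    set B := Matrix.diagonal (fun i => (Real.log (x i) : ℂ)) with hB
    have hU2 : Uᴴ * U = 1 := hU.2
    have hcol : ∀ M : Matrix (Fin d) (Fin d) ℂ, Uᴴ * (U * M) = M := by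
      intro M; rw [← Matrix.mul_assoc, hU2, Matrix.one_mul]
    have key : (U * A * Uᴴ) * (U * B * Uᴴ) * (U * B * Uᴴ) = U * (A * (B * (B * Uᴴ))) := by
      simp only [Matrix.mul_assoc, hcol]
    rw [key, Matrix.trace_mul_comm, Matrix.mul_assoc, Matrix.mul_assoc,
      Matrix.mul_assoc, hU2, Matrix.mul_one]
    rw [hA, hB, Matrix.diagonal_mul_diagonal, Matrix.diagonal_mul_diagonal,
      Matrix.trace_diagonal, Complex.re_sum]
    apply Finset.sum_congr rfl
    intro i _
    rw [← Complex.ofReal_mul, ← Complex.ofReal_mul, Complex.ofReal_re]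
    ring
  rw [hmat]
  exact hsc
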